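/- arXiv:1206.2229 — 5 statements merged into one kernel-verified Lean document; each statement's English description precedes it below -/
import Mathlib

section
/- If 3α + 2β = π and s = 2 sin(α/2), then the sides a = sin α, b = sin β, c = sin γ of a triangle with angles α, β, γ (where γ = π - α - β) satisfy a/c = s and b/c = 1 - s². -/
/-! With θ = α/2 the angles are α = 2θ, β = π/2 - 3θ and γ = π/2 + θ, so
a = sin 2θ, b = cos 3θ and c = cos θ. Dividing the double- and triple-angle formulas
by cos θ gives a/c = 2 sin θ and b/c = 4 cos² θ - 3 = 1 - 4 sin² θ. -/

open Real

lemma sin_two_mul_div_cos {θ : ℝ} (hθ : cos θ ≠ 0) : sin (2 * θ) / cos θ = 2 * sin θ := by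
  rw [sin_two_mul]
  field_simp

lemma cos_three_mul_div_cos {θ : ℝ} (hθ : cos θ ≠ 0) :
    cos (3 * θ) / cos θ = 1 - (2 * sin θ) ^ 2 := by
  rw [cos_three_mul, div_eq_iff hθ, mul_pow, sin_sq]
  ring

theorem stmt1_general (α β γ a b c s : ℝ) (hα : 0 < α) (hβ : 0 < β)
    (h : 3 * α + 2 * β = Real.pi) (hγ : γ = Real.pi - α - β)
    (ha : a = Real.sin α) (hb : b = Real.sin β) (hc : c = Real.sin γ)
    (hs : s = 2 * Real.sin (α / 2)) :
    a / c = s ∧ b / c = 1 - s ^ 2 := by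
  set θ := α / 2
  have hα' : α = 2 * θ := by ring
  have hβ' : β = π / 2 - 3 * θ := by linarith
  have hγ' : γ = θ + π / 2 := by linarith
  have hcos : cos θ ≠ 0 := (cos_pos_of_mem_Ioo ⟨by linarith [pi_pos], by linarith⟩).ne'
  have hc' : c = cos θ := by rw [hc, hγ', sin_add_pi_div_two]
  have hb' : b = cos (3 * θ) := by rw [hb, hβ', sin_pi_div_two_sub]
  rw [ha, hα', hb', hc', hs]
  exact ⟨sin_two_mul_div_cos hcos, cos_three_mul_div_cos hcos⟩

theorem stmt1 (α β γ a b c s : ℝ) (hα : 0 < α) (hβ : 0 < β)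
    (h : 3 * α + 2 * β = Real.pi) (hγ : γ = Real.pi - α - β) (hγpos : 0 < γ)
    (ha : a = Real.sin α) (hb : b = Real.sin β) (hc : c = Real.sin γ)
    (hs : s = 2 * Real.sin (α / 2)) :
    a / c = s ∧ b / c = 1 - s ^ 2 :=
  stmt1_general α β γ a b c s hα hβ h hγ ha hb hc hs
end

section
/- Suppose a triangle has sides a, b, c with b = c - a²/c, and let α and β be the angles opposite a and b respectively. Then 3α + 2β = π. -/
/-!
Put `x = a / c`. The relation `c² = a² + b c` turns the two laws of cosines into
`cos α = 1 - x² / 2` and `cos β = x (3 - x²) / 2`, and these polynomials in `x` satisfy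
`4 cos³ α - 3 cos α = 1 - 2 cos² β`, i.e. `cos 3α = cos (π - 2β)`. Since `0 < x < 1`,
`cos α > 1/2` and `cos β > 0`, so both `3α` and `π - 2β` lie in `[0, π]`, where cosine is injective.
-/

open Real Set

lemma le_pi_div_three_of_half_le_cos {α : ℝ} (hα : α ∈ Icc 0 π) (h : 1 / 2 ≤ cos α) :
    α ≤ π / 3 := by
  rw [← cos_pi_div_three] at h
  exact (strictAntiOn_cos.le_iff_ge ⟨by positivity, by linarith [pi_pos]⟩ hα).1 h

lemma le_pi_div_two_of_cos_nonneg {β : ℝ} (hβ : β ∈ Icc 0 π) (h : 0 ≤ cos β) :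
    β ≤ π / 2 := by
  rw [← cos_pi_div_two] at h
  exact (strictAntiOn_cos.le_iff_ge ⟨by positivity, by linarith [pi_pos]⟩ hβ).1 h

lemma three_mul_add_two_mul_eq_pi_of_cos {α β : ℝ} (hα : α ∈ Icc 0 π) (hβ : β ∈ Icc 0 π)
    (hcα : 1 / 2 ≤ cos α) (hcβ : 0 ≤ cos β) (h : cos (3 * α) = -cos (2 * β)) :
    3 * α + 2 * β = π := by
  have hα3 := le_pi_div_three_of_half_le_cos hα hcα
  have hβ2 := le_pi_div_two_of_cos_nonneg hβ hcβ
  rw [← cos_pi_sub] at h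
  have := injOn_cos ⟨by linarith [hα.1], by linarith⟩ ⟨by linarith, by linarith [hβ.1]⟩ h
  linarith

section Triangle

variable {a b c α β : ℝ}

lemma cos_eq_one_sub_div_sq_of_sq_eq (hb : b ≠ 0) (hc : c ≠ 0) (habc : c ^ 2 = a ^ 2 + b * c)
    (hlaw : a ^ 2 = b ^ 2 + c ^ 2 - 2 * b * c * cos α) :
    cos α = 1 - (a / c) ^ 2 / 2 := by
  have h : b * (2 * c * cos α) = b * (b + c) := by linear_combination hlaw + habc
  have h2 : 2 * c * cos α = b + c := mul_left_cancel₀ hb h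
  field_simp
  linear_combination c * h2 - habc

lemma cos_eq_div_mul_three_sub_sq_of_sq_eq (ha : a ≠ 0) (hc : c ≠ 0)
    (habc : c ^ 2 = a ^ 2 + b * c) (hlaw : b ^ 2 = a ^ 2 + c ^ 2 - 2 * a * c * cos β) :
    cos β = a / c * (3 - (a / c) ^ 2) / 2 := by
  have h : a * (2 * c ^ 3 * cos β) = a * (3 * a * c ^ 2 - a ^ 3) := by
    linear_combination c ^ 2 * hlaw + (b * c + c ^ 2 - a ^ 2) * habc
  have h2 : 2 * c ^ 3 * cos β = 3 * a * c ^ 2 - a ^ 3 := mul_left_cancel₀ ha h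
  field_simp
  linear_combination h2

end Triangle

theorem stmt2_general (a b c α β : ℝ)
    (ha : 0 < a) (hb : 0 < b) (hc : 0 < c)
    (hα : 0 < α) (hα' : α < Real.pi) (hβ : 0 < β) (hβ' : β < Real.pi)
    (hlawA : a ^ 2 = b ^ 2 + c ^ 2 - 2 * b * c * Real.cos α)
    (hlawB : b ^ 2 = a ^ 2 + c ^ 2 - 2 * a * c * Real.cos β)
    (hbc : b = c - a ^ 2 / c) :
    3 * α + 2 * β = Real.pi := by
  have habc : c ^ 2 = a ^ 2 + b * c := by
    rw [hbc]
    field_simp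
    ring
  set x := a / c
  have hx0 : 0 < x := div_pos ha hc
  have hx1 : x < 1 := (div_lt_one hc).2 (by nlinarith)
  have hcα := cos_eq_one_sub_div_sq_of_sq_eq hb.ne' hc.ne' habc hlawA
  have hcβ := cos_eq_div_mul_three_sub_sq_of_sq_eq ha.ne' hc.ne' habc hlawB
  refine three_mul_add_two_mul_eq_pi_of_cos ⟨hα.le, hα'.le⟩ ⟨hβ.le, hβ'.le⟩ ?_ ?_ ?_
  · rw [hcα]
    nlinarith
  · have : 0 < 3 - x ^ 2 := by nlinarith
    rw [hcβ]
    positivity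
  · rw [cos_three_mul, cos_two_mul, hcα, hcβ]
    ring

theorem stmt2 (a b c α β : ℝ)
    (ha : 0 < a) (hb : 0 < b) (hc : 0 < c)
    (htri1 : a < b + c) (htri2 : b < a + c) (htri3 : c < a + b)
    (hα : 0 < α) (hα' : α < Real.pi) (hβ : 0 < β) (hβ' : β < Real.pi)
    (hlawA : a ^ 2 = b ^ 2 + c ^ 2 - 2 * b * c * Real.cos α)
    (hlawB : b ^ 2 = a ^ 2 + c ^ 2 - 2 * a * c * Real.cos β)
    (hbc : b = c - a ^ 2 / c) :
    3 * α + 2 * β = Real.pi :=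
  stmt2_general a b c α β ha hb hc hα hα' hβ hβ' hlawA hlawB hbc
end

section
/- If N is a positive integer that is not a perfect square and not twice a perfect square, and there exists an integer solution (M, K) to N = 2K² - M², then there exists a solution with 0 < M < K. -/
/-!
The substitution `(M, K) ↦ (3M - 4K, 3K - 2M)` preserves `2K² - M²` (it is multiplication by the unit
`3 - 2√2` of `ℤ[√2]`). When `N = 2K² - M² > 0` and `0 ≤ K < M`, we have `M < 2K`, so the new `|M|` is
strictly smaller; descending on `|M|` gives a solution with `0 ≤ M ≤ K`. The cases `M = 0` and `M = K`
are excluded since `N` is neither twice a square nor a square.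
-/

theorem two_sq_sub_sq_descent (M K : ℤ) :
    2 * (3 * K - 2 * M) ^ 2 - (3 * M - 4 * K) ^ 2 = 2 * K ^ 2 - M ^ 2 := by
  ring

theorem exists_nonneg_le_of_eq_two_sq_sub_sq {N : ℤ} (hN : 0 < N) (M K : ℤ)
    (h : N = 2 * K ^ 2 - M ^ 2) : ∃ M K : ℤ, 0 ≤ M ∧ M ≤ K ∧ N = 2 * K ^ 2 - M ^ 2 := by
  rcases le_or_gt |M| |K| with hMK | hKM
  · exact ⟨|M|, |K|, abs_nonneg M, hMK, by rw [sq_abs, sq_abs]; exact h⟩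
  have hM2K : |M| < 2 * |K| :=
    abs_lt_of_sq_lt_sq (by rw [mul_pow, sq_abs]; nlinarith [sq_nonneg K]) (by positivity)
  exact exists_nonneg_le_of_eq_two_sq_sub_sq hN (3 * |M| - 4 * |K|) (3 * |K| - 2 * |M|)
    (by rw [two_sq_sub_sq_descent, sq_abs, sq_abs]; exact h)
termination_by M.natAbs
decreasing_by simp only [Int.abs_eq_natAbs] at *; omega

theorem stmt6 (N : ℤ) (hN : 0 < N)
    (hnsq : ¬ ∃ n : ℤ, N = n ^ 2) (hn2sq : ¬ ∃ n : ℤ, N = 2 * n ^ 2)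
    (hsol : ∃ M K : ℤ, N = 2 * K ^ 2 - M ^ 2) :
    ∃ M K : ℤ, 0 < M ∧ M < K ∧ N = 2 * K ^ 2 - M ^ 2 := by
  obtain ⟨M₀, K₀, h₀⟩ := hsol
  obtain ⟨M, K, hM, hMK, h⟩ := exists_nonneg_le_of_eq_two_sq_sub_sq hN M₀ K₀ h₀
  have hMne0 : M ≠ 0 := by
    rintro rfl
    exact hn2sq ⟨K, by rw [h]; ring⟩
  have hMneK : M ≠ K := by
    rintro rfl
    exact hnsq ⟨M, by rw [h]; ring⟩
  exact ⟨M, K, lt_of_le_of_ne hM hMne0.symm, lt_of_le_of_ne hMK hMneK, h⟩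
end

section
/- If p is an odd prime with p ≡ 1 (mod 8) or p ≡ 7 (mod 8), then there exist integers M, K with p = 2K² - M². -/
/-!
If `a² = 2` in `ZMod p`, Thue's lemma gives integers `x, y`, not both zero, with `x ≡ a y (mod p)`
and `x², y² < p`. Then `p ∣ x² - 2y²` and `-2p < x² - 2y² < p`, so `x² - 2y²` is `0` or `-p`;
it is not `0` because `√2` is irrational.
-/

theorem ZMod.exists_intCast_eq_mul_of_sq_le {n : ℕ} [NeZero n] (a : ZMod n) :
    ∃ x y : ℤ, (x ≠ 0 ∨ y ≠ 0) ∧ x ^ 2 ≤ n ∧ y ^ 2 ≤ n ∧ (x : ZMod n) = a * y := by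
  set s := n.sqrt
  have hcard : Fintype.card (ZMod n) < Fintype.card (Fin (s + 1) × Fin (s + 1)) := by
    simpa [ZMod.card, ← sq] using Nat.lt_succ_sqrt' n
  obtain ⟨u, v, huv, heq⟩ := Fintype.exists_ne_map_eq_of_card_lt
    (fun q : Fin (s + 1) × Fin (s + 1) => (q.1 : ZMod n) - a * (q.2 : ZMod n)) hcard
  have sq_le {i j : Fin (s + 1)} : ((i : ℤ) - j) ^ 2 ≤ n := by
    have : ((i : ℤ) - j).natAbs ≤ s := by omega
    rw [← Int.natAbs_sq]
    exact_mod_cast Nat.le_sqrt'.mp this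
  refine ⟨(u.1 : ℤ) - v.1, (u.2 : ℤ) - v.2, ?_, sq_le, sq_le, ?_⟩
  · contrapose! huv
    exact Prod.ext (Fin.ext (by omega)) (Fin.ext (by omega))
  · push_cast
    linear_combination heq

theorem Int.eq_zero_of_sq_eq_two_mul_sq {x y : ℤ} (h : x ^ 2 = 2 * y ^ 2) : y = 0 := by
  by_contra hy
  have : ¬IsSquare (2 : ℚ) := by norm_num
  exact this ⟨x / y, by field_simp; exact_mod_cast h.symm⟩

theorem Nat.Prime.intCast_sq_ne {p : ℕ} (hp : p.Prime) (z : ℤ) : z ^ 2 ≠ p := by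
  intro h
  have h' : z.natAbs ^ 2 = p := by exact_mod_cast (Int.natAbs_sq z).trans h
  exact hp.prime.not_isSquare ⟨z.natAbs, by rw [← h', sq]⟩

theorem exists_eq_two_mul_sq_sub_sq_of_isSquare_two {p : ℕ} [Fact p.Prime]
    (h : IsSquare (2 : ZMod p)) : ∃ M K : ℤ, (p : ℤ) = 2 * K ^ 2 - M ^ 2 := by
  have hp : p.Prime := Fact.out
  obtain ⟨a, ha⟩ := h
  obtain ⟨x, y, hxy, hx, hy, hxay⟩ := ZMod.exists_intCast_eq_mul_of_sq_le a
  have hx : x ^ 2 < p := hx.lt_of_ne (hp.intCast_sq_ne x)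
  have hy : y ^ 2 < p := hy.lt_of_ne (hp.intCast_sq_ne y)
  obtain ⟨t, ht⟩ : (p : ℤ) ∣ x ^ 2 - 2 * y ^ 2 := by
    rw [← ZMod.intCast_zmod_eq_zero_iff_dvd]
    push_cast
    rw [hxay, ha]
    ring
  have hp0 : (0 : ℤ) < p := mod_cast hp.pos
  have ht_lo : -2 < t := by nlinarith
  have ht_hi : t < 1 := by nlinarith
  obtain rfl | rfl : t = -1 ∨ t = 0 := by omega
  · exact ⟨x, y, by linarith⟩
  · have hy0 : y = 0 := Int.eq_zero_of_sq_eq_two_mul_sq (x := x) (by linarith)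
    have hx0 : x = 0 := pow_eq_zero_iff two_ne_zero |>.mp (by subst hy0; linarith)
    simp [hx0, hy0] at hxy

theorem stmt7_general (p : ℕ) (hp : p.Prime)
    (hmod : p % 8 = 1 ∨ p % 8 = 7) :
    ∃ M K : ℤ, (p : ℤ) = 2 * K ^ 2 - M ^ 2 := by
  have := Fact.mk hp
  exact exists_eq_two_mul_sq_sub_sq_of_isSquare_two
    ((ZMod.exists_sq_eq_two_iff (by omega)).mpr hmod)

theorem stmt7 (p : ℕ) (hp : p.Prime) (hodd : Odd p)
    (hmod : p % 8 = 1 ∨ p % 8 = 7) :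
    ∃ M K : ℤ, (p : ℤ) = 2 * K ^ 2 - M ^ 2 :=
  stmt7_general p hp hmod
end

section
/- For 0 < a < 1, the function f(a) = 3·arccos(1 - a²/2) + 2·arccos((3a - a³)/2) is constant and equal to π. -/
/-!
Substitute `a = 2 sin θ` with `θ = arcsin (a / 2) ∈ [0, π/6]`. Then `1 - a²/2 = cos 2θ` and
`(3a - a³)/2 = sin 3θ = cos (π/2 - 3θ)`, both angles lying in `[0, π]`, so the sum of arccosines
is `3 · 2θ + 2 · (π/2 - 3θ) = π`.
-/

open Real

lemma one_sub_two_mul_sin_sq_div_two (θ : ℝ) : 1 - (2 * sin θ) ^ 2 / 2 = cos (2 * θ) := by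
  rw [cos_two_mul, cos_sq']
  ring

lemma three_mul_two_mul_sin_sub_cube_div_two (θ : ℝ) :
    (3 * (2 * sin θ) - (2 * sin θ) ^ 3) / 2 = cos (π / 2 - 3 * θ) := by
  rw [cos_pi_div_two_sub, sin_three_mul]
  ring

lemma arccos_one_sub_two_mul_sin_sq_div_two {θ : ℝ} (h0 : 0 ≤ θ) (h1 : θ ≤ π / 2) :
    arccos (1 - (2 * sin θ) ^ 2 / 2) = 2 * θ := by
  rw [one_sub_two_mul_sin_sq_div_two, arccos_cos (by linarith) (by linarith)]

lemma arccos_three_mul_two_mul_sin_sub_cube_div_two {θ : ℝ} (h0 : -π / 6 ≤ θ) (h1 : θ ≤ π / 6) :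
    arccos ((3 * (2 * sin θ) - (2 * sin θ) ^ 3) / 2) = π / 2 - 3 * θ := by
  rw [three_mul_two_mul_sin_sub_cube_div_two, arccos_cos (by linarith) (by linarith)]

theorem three_mul_arccos_add_two_mul_arccos_eq_pi {a : ℝ} (h0 : 0 ≤ a) (h1 : a ≤ 1) :
    3 * arccos (1 - a ^ 2 / 2) + 2 * arccos ((3 * a - a ^ 3) / 2) = π := by
  set θ := arcsin (a / 2)
  have ha : a = 2 * sin θ := by rw [sin_arcsin (by linarith) (by linarith)]; ring
  have hθ0 : 0 ≤ θ := arcsin_nonneg.mpr (by linarith)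
  have hθ1 : θ ≤ π / 6 := by
    rw [arcsin_le_iff_le_sin' ⟨by linarith [pi_pos], by linarith [pi_pos]⟩, sin_pi_div_six]
    linarith
  rw [ha, arccos_one_sub_two_mul_sin_sq_div_two hθ0 (by linarith [pi_pos]),
    arccos_three_mul_two_mul_sin_sub_cube_div_two (by linarith [pi_pos]) hθ1]
  ring

theorem stmt16 (a : ℝ) (h0 : 0 < a) (h1 : a < 1) :
    3 * Real.arccos (1 - a ^ 2 / 2) + 2 * Real.arccos ((3 * a - a ^ 3) / 2)
      = Real.pi :=
  three_mul_arccos_add_two_mul_arccos_eq_pi h0.le h1.le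
end
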